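/- arXiv:0904.3664 — 5 statements merged into one kernel-verified Lean document; each statement's English description precedes it below -/
import Mathlib

section
/- Let p⁰ ∈ ℝ^n be a probability vector with p⁰_i > 0 for all i, let α ∈ ℝ^n, μ ∈ ℝ and β ∈ ℝ. Define the Gibbs distribution q by q_i = p⁰_i e^{μ α_i} / Z where Z = Σ_j p⁰_j e^{μ α_j}, and suppose q satisfies the linear constraint Σ_i α_i q_i = β. Then for every probability vector p (p_i ≥ 0, Σ_i p_i = 1) satisfying Σ_i α_i p_i = β, one has D(q‖p⁰) ≤ D(p‖p⁰); that is, the Gibbs distribution minimizes the relative entropy to the prior p⁰ among all distributions satisfying the linear constraint. -/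
/-!
Write `Z` for the partition function and `q` for the Gibbs distribution. Since
`log (q i / p0 i) = μ a i - log Z` is affine in `a i`, every probability vector `p` satisfies
`D(p‖p0) = D(p‖q) + μ ∑ a i p i - log Z`. On the constraint set the last two terms are constant,
and at `p = q` the first vanishes, so `D(p‖p0) - D(q‖p0) = D(p‖q) ≥ 0` by Gibbs' inequality.
-/

open Real Finset

section RelEntropy

variable {ι : Type*} [Fintype ι]

noncomputable def relEntropy (p r : ι → ℝ) : ℝ := ∑ i, p i * log (p i / r i)

noncomputable def partitionFn (p0 a : ι → ℝ) (μ : ℝ) : ℝ := ∑ j, p0 j * exp (μ * a j)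

noncomputable def gibbs (p0 a : ι → ℝ) (μ : ℝ) (i : ι) : ℝ :=
  p0 i * exp (μ * a i) / partitionFn p0 a μ

lemma sub_le_mul_log_div {p q : ℝ} (hp : 0 ≤ p) (hq : 0 < q) : p - q ≤ p * log (p / q) := by
  have h := mul_le_mul_of_nonneg_left (self_sub_one_le_mul_log (div_nonneg hp hq.le)) hq.le
  rwa [mul_sub, mul_div_cancel₀ _ hq.ne', mul_one, ← mul_assoc, mul_div_cancel₀ _ hq.ne'] at h

lemma relEntropy_nonneg {p r : ι → ℝ} (hp : ∀ i, 0 ≤ p i) (hr : ∀ i, 0 < r i)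
    (hsum : ∑ i, r i ≤ ∑ i, p i) : 0 ≤ relEntropy p r :=
  calc 0 ≤ ∑ i, (p i - r i) := by rw [sum_sub_distrib]; linarith
    _ ≤ relEntropy p r := sum_le_sum fun i _ => sub_le_mul_log_div (hp i) (hr i)

-- `0 / 0 = 0` and `log 0 = 0` make the vanishing coordinates harmless.
@[simp]
lemma relEntropy_self (p : ι → ℝ) : relEntropy p p = 0 := by
  refine sum_eq_zero fun i _ => ?_
  rcases eq_or_ne (p i) 0 with h | h <;> simp [h]

lemma mul_log_div_eq_add (p : ℝ) {q r : ℝ} (hq : 0 < q) (hr : 0 < r) :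
    p * log (p / r) = p * log (p / q) + p * log (q / r) := by
  rcases eq_or_ne p 0 with rfl | hp
  · simp
  rw [← mul_add, ← log_mul (div_ne_zero hp hq.ne') (div_ne_zero hq.ne' hr.ne'),
    div_mul_div_cancel₀ hq.ne']

variable {p0 a : ι → ℝ} {μ : ℝ}

lemma partitionFn_pos [Nonempty ι] (hp0 : ∀ i, 0 < p0 i) : 0 < partitionFn p0 a μ :=
  sum_pos (fun i _ => mul_pos (hp0 i) (exp_pos _)) univ_nonempty

lemma gibbs_pos [Nonempty ι] (hp0 : ∀ i, 0 < p0 i) (i : ι) : 0 < gibbs p0 a μ i :=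
  div_pos (mul_pos (hp0 i) (exp_pos _)) (partitionFn_pos hp0)

lemma sum_gibbs [Nonempty ι] (hp0 : ∀ i, 0 < p0 i) : ∑ i, gibbs p0 a μ i = 1 := by
  simp only [gibbs]
  rw [← sum_div, ← partitionFn, div_self (partitionFn_pos hp0).ne']

lemma log_gibbs_div [Nonempty ι] (hp0 : ∀ i, 0 < p0 i) (i : ι) :
    log (gibbs p0 a μ i / p0 i) = μ * a i - log (partitionFn p0 a μ) := by
  have hratio : gibbs p0 a μ i / p0 i = exp (μ * a i) / partitionFn p0 a μ := by
    rw [gibbs, div_right_comm, mul_div_cancel_left₀ _ (hp0 i).ne']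
  rw [hratio, log_div (exp_pos _).ne' (partitionFn_pos hp0).ne', log_exp]

lemma relEntropy_eq_relEntropy_gibbs_add [Nonempty ι] (hp0 : ∀ i, 0 < p0 i) {p : ι → ℝ}
    (hpsum : ∑ i, p i = 1) :
    relEntropy p p0 =
      relEntropy p (gibbs p0 a μ) + (μ * ∑ i, a i * p i - log (partitionFn p0 a μ)) := by
  have hsplit : ∀ i, p i * log (p i / p0 i) =
      p i * log (p i / gibbs p0 a μ i) + (μ * (a i * p i) - log (partitionFn p0 a μ) * p i) := by
    intro i
    rw [mul_log_div_eq_add _ (gibbs_pos hp0 i) (hp0 i), log_gibbs_div (a := a) (μ := μ) hp0 i]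
    ring
  rw [relEntropy, relEntropy, sum_congr rfl fun i _ => hsplit i, sum_add_distrib,
    sum_sub_distrib, ← mul_sum, ← mul_sum, hpsum, mul_one]

theorem relEntropy_gibbs_le (hp0 : ∀ i, 0 < p0 i) {p : ι → ℝ} (hp : ∀ i, 0 ≤ p i)
    (hpsum : ∑ i, p i = 1) (hpa : ∑ i, a i * p i = ∑ i, a i * gibbs p0 a μ i) :
    relEntropy (gibbs p0 a μ) p0 ≤ relEntropy p p0 := by
  have : Nonempty ι := (nonempty_of_sum_ne_zero (hpsum ▸ one_ne_zero)).to_type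
  rw [relEntropy_eq_relEntropy_gibbs_add (μ := μ) hp0 hpsum,
    relEntropy_eq_relEntropy_gibbs_add hp0 (sum_gibbs hp0), relEntropy_self, hpa]
  have := relEntropy_nonneg (r := gibbs p0 a μ) hp (gibbs_pos hp0) (by rw [sum_gibbs hp0, hpsum])
  linarith

end RelEntropy

theorem stmt3_general (n : ℕ) (p0 a : Fin n → ℝ) (μ β : ℝ)
    (hp0 : ∀ i, 0 < p0 i)
    (q : Fin n → ℝ)
    (hq : q = fun i => p0 i * Real.exp (μ * a i) / ∑ j, p0 j * Real.exp (μ * a j))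
    (hqβ : ∑ i, a i * q i = β) :
    ∀ p : Fin n → ℝ, (∀ i, 0 ≤ p i) → (∑ i, p i) = 1 → (∑ i, a i * p i) = β →
      ∑ i, q i * Real.log (q i / p0 i) ≤ ∑ i, p i * Real.log (p i / p0 i) := by
  intro p hp hpsum hpβ
  subst hq
  exact relEntropy_gibbs_le (μ := μ) hp0 hp hpsum (hpβ.trans hqβ.symm)

/-- The Gibbs distribution `q i = p0 i * exp (μ * a i) / Z` minimizes the relative entropy
`D(p‖p0)` among all probability vectors `p` satisfying the linear constraint
`∑ i, a i * p i = β`. -/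
theorem stmt3 (n : ℕ) (p0 a : Fin n → ℝ) (μ β : ℝ)
    (hp0 : ∀ i, 0 < p0 i) (hp0sum : ∑ i, p0 i = 1)
    (q : Fin n → ℝ)
    (hq : q = fun i => p0 i * Real.exp (μ * a i) / ∑ j, p0 j * Real.exp (μ * a j))
    (hqβ : ∑ i, a i * q i = β) :
    ∀ p : Fin n → ℝ, (∀ i, 0 ≤ p i) → (∑ i, p i) = 1 → (∑ i, a i * p i) = β →
      ∑ i, q i * Real.log (q i / p0 i) ≤ ∑ i, p i * Real.log (p i / p0 i) :=
  stmt3_general n p0 a μ β hp0 q hq hqβ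
end

section
/- Let G be a real m×k matrix. Then G satisfies the three conditions (i) G ≥ 0 entrywise, (ii) Gᵀ G = I_k, and (iii) G Gᵀ 𝟙 = 𝟙 (where 𝟙 ∈ ℝ^m is the all-ones vector), if and only if there exists a surjective map ψ : {1,...,m} → {1,...,k} such that G_{ij} = 1/√(l_j) when ψ(i) = j and G_{ij} = 0 otherwise, where l_j = |{i : ψ(i) = j}|. -/
/-!
Entrywise nonnegativity and orthogonality of the columns leave at most one nonzero entry in
each row of `G`, and `G Gᵀ 𝟙 = 𝟙` leaves at least one; its column is `ψ i`. With
`s = Gᵀ 𝟙` the vector of column sums, row `i` of `G s = 𝟙` reads `G i (ψ i) * s (ψ i) = 1`,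
so every nonzero entry of column `j` equals `(s j)⁻¹`. Summing column `j` gives
`s j = l_j / s j`, i.e. `s j = √l_j`, and unit column norms make every class nonempty.
-/

open Finset Function Matrix

namespace Matrix

variable {ι κ R : Type*}

theorem mulVec_apply_of_forall_ne_eq_zero [NonUnitalNonAssocSemiring R] [Fintype κ]
    {G : Matrix ι κ R} {ψ : ι → κ} (hG : ∀ i j, ψ i ≠ j → G i j = 0) (v : κ → R) (i : ι) :
    (G *ᵥ v) i = G i (ψ i) * v (ψ i) := by
  rw [mulVec, dotProduct, sum_eq_single (ψ i) (fun j _ hj => by rw [hG i j hj.symm, zero_mul])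
    (fun h => absurd (mem_univ _) h)]

variable [Fintype ι] [CommSemiring R] {G : Matrix ι κ R}

theorem transpose_mul_self_apply (G : Matrix ι κ R) (j j' : κ) :
    (Gᵀ * G) j j' = ∑ i, G i j * G i j' := by
  simp only [mul_apply, transpose_apply]

variable [DecidableEq κ]

theorem apply_eq_zero_of_apply_ne_zero [PartialOrder R] [IsOrderedRing R] [NoZeroDivisors R]
    (hnn : ∀ i j, 0 ≤ G i j) (horth : Gᵀ * G = 1) {i : ι} {j j' : κ} (hij : G i j ≠ 0)
    (hjj' : j ≠ j') : G i j' = 0 := by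
  have hsum : ∑ p, G p j * G p j' = 0 := by
    rw [← transpose_mul_self_apply, horth, one_apply_ne hjj']
  have hprod := (sum_eq_zero_iff_of_nonneg fun p _ => mul_nonneg (hnn p j) (hnn p j')).mp
    hsum i (mem_univ i)
  exact (mul_eq_zero.mp hprod).resolve_left hij

theorem surjective_of_transpose_mul_self_eq_one [Nontrivial R] {ψ : ι → κ}
    (hψ : ∀ i j, ψ i ≠ j → G i j = 0) (horth : Gᵀ * G = 1) : Surjective ψ := by
  intro j
  by_contra! h
  have hjj := congrFun (congrFun horth j) j
  simp [transpose_mul_self_apply, hψ _ j (h _)] at hjj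

end Matrix

namespace KMeans

variable {ι κ : Type*} [Fintype ι] [DecidableEq κ]

def classSize (ψ : ι → κ) (j : κ) : ℕ := #{i | ψ i = j}

theorem sum_ite_eq_classSize_mul {R : Type*} [NonAssocSemiring R] (ψ : ι → κ) (j : κ) (c : R) :
    ∑ i, (if ψ i = j then c else 0) = classSize ψ j * c := by
  rw [← sum_filter, sum_const, nsmul_eq_mul, classSize]

theorem classSize_pos {ψ : ι → κ} (hψ : Surjective ψ) (j : κ) : 0 < classSize ψ j := by
  obtain ⟨i, hi⟩ := hψ j
  exact card_pos.mpr ⟨i, by simp [hi]⟩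

noncomputable def clusterIndicator (ψ : ι → κ) : Matrix ι κ ℝ :=
  of fun i j => if ψ i = j then (√(classSize ψ j))⁻¹ else 0

def IsFeasible [Fintype κ] (G : Matrix ι κ ℝ) : Prop :=
  (∀ i j, 0 ≤ G i j) ∧ Gᵀ * G = 1 ∧ (G * Gᵀ) *ᵥ (fun _ => (1 : ℝ)) = fun _ => 1

section clusterIndicator

variable {ψ : ι → κ}

theorem clusterIndicator_nonneg (ψ : ι → κ) (i : ι) (j : κ) : 0 ≤ clusterIndicator ψ i j := by
  simp only [clusterIndicator, of_apply]
  split_ifs <;> positivity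

theorem clusterIndicator_eq_zero_of_ne {i : ι} {j : κ} (h : ψ i ≠ j) :
    clusterIndicator ψ i j = 0 := if_neg h

theorem transpose_mul_clusterIndicator [Fintype κ] (hψ : Surjective ψ) :
    (clusterIndicator ψ)ᵀ * clusterIndicator ψ = 1 := by
  ext j j'
  rw [transpose_mul_self_apply, one_apply]
  split_ifs with h
  · subst h
    have hsq (i : ι) : clusterIndicator ψ i j * clusterIndicator ψ i j =
        if ψ i = j then (classSize ψ j : ℝ)⁻¹ else 0 := by
      simp only [clusterIndicator, of_apply]
      split_ifs
      · rw [← mul_inv, Real.mul_self_sqrt (Nat.cast_nonneg _)]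
      · rw [mul_zero]
    simp only [hsq, sum_ite_eq_classSize_mul]
    exact mul_inv_cancel₀ (by exact_mod_cast (classSize_pos hψ j).ne')
  · refine sum_eq_zero fun i _ => ?_
    by_cases hi : ψ i = j
    · rw [clusterIndicator_eq_zero_of_ne (j := j') (by rwa [hi]), mul_zero]
    · rw [clusterIndicator_eq_zero_of_ne hi, zero_mul]

theorem clusterIndicator_transpose_mulVec_one [Fintype κ] (ψ : ι → κ) :
    (clusterIndicator ψ)ᵀ *ᵥ (fun _ => 1) = fun j => √(classSize ψ j) := by
  funext j
  simp only [mulVec, dotProduct, transpose_apply, mul_one, clusterIndicator, of_apply,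
    sum_ite_eq_classSize_mul, ← div_eq_mul_inv, Real.div_sqrt]

theorem isFeasible_clusterIndicator [Fintype κ] (hψ : Surjective ψ) :
    IsFeasible (clusterIndicator ψ) := by
  refine ⟨clusterIndicator_nonneg ψ, transpose_mul_clusterIndicator hψ, ?_⟩
  funext i
  rw [← mulVec_mulVec, clusterIndicator_transpose_mulVec_one,
    mulVec_apply_of_forall_ne_eq_zero (fun _ _ => clusterIndicator_eq_zero_of_ne)]
  simp only [clusterIndicator, of_apply]
  exact inv_mul_cancel₀ (Real.sqrt_pos.mpr (by exact_mod_cast classSize_pos hψ _)).ne'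

end clusterIndicator

section IsFeasible

variable {G : Matrix ι κ ℝ}

theorem apply_eq_inv_sqrt_classSize {ψ : ι → κ} (hnn : ∀ i j, 0 ≤ G i j)
    (hψ : ∀ i j, ψ i ≠ j → G i j = 0) (hrow : ∀ i, G i (ψ i) * ∑ p, G p (ψ i) = 1) (i : ι) :
    G i (ψ i) = (√(classSize ψ (ψ i)))⁻¹ := by
  have hinv (p : ι) : G p (ψ p) = (∑ q, G q (ψ p))⁻¹ := eq_inv_of_mul_eq_one_left (hrow p)
  set j := ψ i
  set s := ∑ p, G p j
  have hs : s = classSize ψ j * s⁻¹ := calc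
    s = ∑ p, if ψ p = j then s⁻¹ else 0 := sum_congr rfl fun p _ => by
        split_ifs with h
        · rw [← h, hinv, h]
        · exact hψ p j h
    _ = _ := sum_ite_eq_classSize_mul ψ j _
  have hne : s ≠ 0 := right_ne_zero_of_mul_eq_one (hrow i)
  field_simp at hs
  rw [hinv i, ← Real.sqrt_sq (sum_nonneg fun p _ => hnn p j), hs]

variable [Fintype κ]

theorem IsFeasible.exists_eq_clusterIndicator (hG : IsFeasible G) :
    ∃ ψ : ι → κ, Surjective ψ ∧ G = clusterIndicator ψ := by
  obtain ⟨hnn, horth, hones⟩ := hG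
  have hrow : G *ᵥ (fun j => ∑ p, G p j) = fun _ => 1 := by
    rw [← hones, ← mulVec_mulVec]
    congr 1
    funext j
    simp [mulVec, dotProduct]
  obtain ⟨ψ, hψ⟩ : ∃ ψ : ι → κ, ∀ i j, ψ i ≠ j → G i j = 0 := by
    have hne (i : ι) : ∃ j, G i j ≠ 0 := by
      by_contra! h
      simpa [mulVec, dotProduct, h] using congrFun hrow i
    choose ψ hψ using hne
    exact ⟨ψ, fun i j => apply_eq_zero_of_apply_ne_zero hnn horth (hψ i)⟩
  have hrowψ (i : ι) : G i (ψ i) * ∑ p, G p (ψ i) = 1 :=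
    (mulVec_apply_of_forall_ne_eq_zero hψ _ i).symm.trans (congrFun hrow i)
  refine ⟨ψ, surjective_of_transpose_mul_self_eq_one hψ horth, ext fun i j => ?_⟩
  by_cases h : ψ i = j
  · subst h
    rw [apply_eq_inv_sqrt_classSize hnn hψ hrowψ i, clusterIndicator, of_apply, if_pos rfl]
  · rw [hψ i j h, clusterIndicator_eq_zero_of_ne h]

theorem isFeasible_iff : IsFeasible G ↔ ∃ ψ : ι → κ, Surjective ψ ∧ G = clusterIndicator ψ :=
  ⟨IsFeasible.exists_eq_clusterIndicator, by
    rintro ⟨ψ, hψ, rfl⟩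
    exact isFeasible_clusterIndicator hψ⟩

end IsFeasible

end KMeans

/-- Characterization of the K-means feasibility set: an `m × k` matrix `G` is entrywise
nonnegative with `Gᵀ G = I` and `G Gᵀ 𝟙 = 𝟙` iff it is the column-scaled indicator matrix
of a surjective class assignment `ψ`, with `G i j = 1/√(l_j)` when `ψ i = j` (where `l_j`
is the size of class `j`) and `0` otherwise. -/
theorem stmt10 (m k : ℕ) (G : Matrix (Fin m) (Fin k) ℝ) :
    ((∀ i j, 0 ≤ G i j) ∧ Gᵀ * G = 1 ∧ (G * Gᵀ) *ᵥ (fun _ => (1 : ℝ)) = fun _ => 1) ↔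
    ∃ ψ : Fin m → Fin k, Function.Surjective ψ ∧
      ∀ i j, G i j =
        if ψ i = j then (Real.sqrt ((Finset.univ.filter fun i' => ψ i' = j).card))⁻¹
        else 0 :=
  KMeans.isFeasible_iff.trans (exists_congr fun _ => and_congr_right fun _ => ext_iff.symm)
end

section
/- Let G be a real m×k matrix. Then G satisfies the three conditions (i) G ≥ 0 entrywise, (ii) G 𝟙 = 𝟙 (each row sums to 1, where 𝟙 denotes an all-ones vector), and (iii) Gᵀ G is a diagonal matrix, if and only if there exists a map ψ : {1,...,m} → {1,...,k} such that G_{ij} = 1 when ψ(i) = j and G_{ij} = 0 otherwise; that is, G is a 0/1 class-indicator matrix with exactly one 1 in each row. -/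
/-!
Nonnegativity turns the vanishing off-diagonal entries `∑ᵢ G i j * G i j'` of `Gᵀ G` into the
vanishing of every product `G i j * G i j'` with `j ≠ j'`, so each row has at most one nonzero
entry; as the row sums to `1`, that entry exists and equals `1`.
-/

open Matrix

variable {ι κ R : Type*}

theorem Matrix.mulVec_one_eq_one_iff [Fintype κ] [NonAssocSemiring R] (G : Matrix ι κ R) :
    (G *ᵥ fun _ => 1) = (fun _ => 1) ↔ ∀ i, ∑ j, G i j = 1 := by
  simp only [funext_iff, mulVec, dotProduct, mul_one]

theorem Matrix.isDiag_transpose_mul_self_iff [Fintype ι] [Semiring R] [PartialOrder R]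
    [IsOrderedRing R] {G : Matrix ι κ R} (hG : ∀ i j, 0 ≤ G i j) :
    (Gᵀ * G).IsDiag ↔ ∀ i, Pairwise fun j j' => G i j * G i j' = 0 := by
  simp only [IsDiag, Pairwise, mul_apply, transpose_apply]
  refine ⟨fun h i j j' hjj' => ?_, fun h j j' hjj' => Finset.sum_eq_zero fun i _ => h i hjj'⟩
  exact (Finset.sum_eq_zero_iff_of_nonneg fun i _ => mul_nonneg (hG i j) (hG i j')).1
    (h hjj') i (Finset.mem_univ i)

theorem exists_eq_single_of_sum_eq_one [Fintype κ] [DecidableEq κ] [Semiring R]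
    [NoZeroDivisors R] [Nontrivial R] {v : κ → R} (hsum : ∑ j, v j = 1)
    (horth : Pairwise fun j j' => v j * v j' = 0) : ∃ j, v = Pi.single j 1 := by
  obtain ⟨j, -, hj⟩ := Finset.exists_ne_zero_of_sum_ne_zero (hsum ▸ one_ne_zero)
  have hother : ∀ j', j' ≠ j → v j' = 0 := fun j' hj' =>
    (mul_eq_zero.1 (horth hj'.symm)).resolve_left hj
  have hone : v j = 1 := by
    rwa [Finset.sum_eq_single_of_mem j (Finset.mem_univ j) fun j' _ => hother j'] at hsum
  refine ⟨j, funext fun j' => ?_⟩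
  rcases eq_or_ne j' j with rfl | hj'
  · simp [hone]
  · simp [hother j' hj', hj']

theorem pairwise_mul_eq_zero_of_eq_single [MulZeroClass R] [DecidableEq κ] {v : κ → R} {j : κ}
    {a : R} (hv : v = Pi.single j a) : Pairwise fun j₁ j₂ => v j₁ * v j₂ = 0 := by
  subst hv
  intro j₁ j₂ h
  rcases eq_or_ne j₁ j with rfl | hj₁
  · simp [h.symm]
  · simp [hj₁]

/-- Characterization of the Min-Cut feasibility set: an `m × k` matrix `G` is entrywise
nonnegative with `G 𝟙 = 𝟙` and `Gᵀ G` diagonal iff it is a 0/1 class-indicator matrix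
with exactly one `1` in each row. -/
theorem stmt11 (m k : ℕ) (G : Matrix (Fin m) (Fin k) ℝ) :
    ((∀ i j, 0 ≤ G i j) ∧ (G *ᵥ (fun _ => (1 : ℝ)) = fun _ => 1) ∧ (Gᵀ * G).IsDiag) ↔
    ∃ ψ : Fin m → Fin k, ∀ i j, G i j = if ψ i = j then 1 else 0 := by
  have single_iff (ψ : Fin m → Fin k) :
      (∀ i j, G i j = if ψ i = j then 1 else 0) ↔ ∀ i, G i = Pi.single (ψ i) 1 := by
    simp only [funext_iff, Pi.single_apply, eq_comm (b := ψ _)]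
  simp only [single_iff, mulVec_one_eq_one_iff]
  constructor
  · rintro ⟨hG, hsum, hdiag⟩
    rw [isDiag_transpose_mul_self_iff hG] at hdiag
    exact Classical.skolem.1 fun i => exists_eq_single_of_sum_eq_one (hsum i) (hdiag i)
  · rintro ⟨ψ, hψ⟩
    have hG : ∀ i j, 0 ≤ G i j := fun i j => by
      rw [hψ i, Pi.single_apply]
      positivity
    exact ⟨hG, fun i => by simp [hψ i], (isDiag_transpose_mul_self_iff hG).2 fun i =>
      pairwise_mul_eq_zero_of_eq_single (hψ i)⟩
end

section
/- Let K be a symmetric positive-semidefinite n×n real matrix whose entries lie in [0,1], and let D = diag(K𝟙) be the diagonal matrix of row sums of K. Then the matrix K' = K − D + I is the closest matrix to K, in the entrywise L1 norm ‖B‖₁ = Σ_{i,j} |B_{ij}|, among all symmetric matrices F with F𝟙 = 𝟙: for every F with F = Fᵀ and F𝟙 = 𝟙 one has ‖K − F‖₁ ≥ ‖D − I‖₁, and ‖K − (K − D + I)‖₁ = ‖D − I‖₁. -/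
/-!
Row `i` of `D - I` has the single nonzero entry `(K𝟙)ᵢ - 1`, which is also the row sum of `K - F`
when `F𝟙 = 𝟙`; the triangle inequality on each row gives the bound, and `K - K' = D - I`.
-/

open Matrix

namespace Matrix

variable {m n R : Type*} [Fintype n] [Ring R] [LinearOrder R] [IsOrderedRing R]

theorem sum_abs_diagonal_sub_one [DecidableEq n] (v : n → R) :
    ∑ i, ∑ j, |(diagonal v - 1) i j| = ∑ i, |v i - 1| := by
  simp only [← diagonal_one, diagonal_sub]
  simp [diagonal_apply, apply_ite]

theorem sum_abs_mulVec_one_sub_le [Fintype m] (A B : Matrix m n R) :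
    ∑ i, |(A *ᵥ 1) i - (B *ᵥ 1) i| ≤ ∑ i, ∑ j, |(A - B) i j| := by
  refine Finset.sum_le_sum fun i _ => ?_
  simpa only [mulVec, dotProduct, Pi.one_apply, mul_one, Matrix.sub_apply,
    Finset.sum_sub_distrib] using Finset.abs_sum_le_sum_abs (fun j => (A - B) i j) Finset.univ

end Matrix

theorem stmt12_general (n : ℕ) (K : Matrix (Fin n) (Fin n) ℝ) :
    (∀ F : Matrix (Fin n) (Fin n) ℝ, Fᵀ = F → (F *ᵥ (fun _ => (1 : ℝ)) = fun _ => 1) →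
      ∑ i, ∑ j, |(Matrix.diagonal (K *ᵥ fun _ => (1 : ℝ)) - 1) i j| ≤
        ∑ i, ∑ j, |(K - F) i j|) ∧
    ∑ i, ∑ j, |(K - (K - Matrix.diagonal (K *ᵥ fun _ => (1 : ℝ)) + 1)) i j| =
      ∑ i, ∑ j, |(Matrix.diagonal (K *ᵥ fun _ => (1 : ℝ)) - 1) i j| := by
  refine ⟨fun F _ hF => ?_, by simp only [sub_add, sub_sub_cancel]⟩
  have h := sum_abs_mulVec_one_sub_le K F
  rw [show F *ᵥ 1 = 1 from hF] at h
  rwa [sum_abs_diagonal_sub_one]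

/-- Ratio-Cuts normalization: with `D = diag(K𝟙)`, the matrix `K' = K − D + I` is the
closest matrix to `K` in entrywise L1 norm among all symmetric matrices `F` with
`F𝟙 = 𝟙`: every such `F` satisfies `‖K − F‖₁ ≥ ‖D − I‖₁`, and `‖K − K'‖₁ = ‖D − I‖₁`. -/
theorem stmt12 (n : ℕ) (K : Matrix (Fin n) (Fin n) ℝ) (hpsd : K.PosSemidef)
    (hrange : ∀ i j, K i j ∈ Set.Icc (0 : ℝ) 1) :
    (∀ F : Matrix (Fin n) (Fin n) ℝ, Fᵀ = F → (F *ᵥ (fun _ => (1 : ℝ)) = fun _ => 1) →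
      ∑ i, ∑ j, |(Matrix.diagonal (K *ᵥ fun _ => (1 : ℝ)) - 1) i j| ≤
        ∑ i, ∑ j, |(K - F) i j|) ∧
    ∑ i, ∑ j, |(K - (K - Matrix.diagonal (K *ᵥ fun _ => (1 : ℝ)) + 1)) i j| =
      ∑ i, ∑ j, |(Matrix.diagonal (K *ᵥ fun _ => (1 : ℝ)) - 1) i j| :=
  stmt12_general n K
end

section
/- Let X be a measurable space, D a probability measure on X, C a finite nonempty set of measurable functions from X to {0,1}, and c : X → {0,1} a measurable target function. For h ∈ C define err(h) = D({x : h(x) ≠ c(x)}). Let ε, δ ∈ (0,1) and let m be a positive integer with m ≥ (1/ε) · ln(|C|/δ). Then under the product measure D^m on X^m, the probability of the event { (x₁,...,x_m) : ∃ h ∈ C such that h(x_i) = c(x_i) for all i = 1,...,m and err(h) > ε } is at most δ. In particular, any algorithm that outputs a hypothesis in C consistent with the training sample is a PAC learning algorithm for C with sample complexity m₀ = (1/ε) ln(|C|/δ). -/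
/-!
A fixed hypothesis whose error exceeds `ε` agrees with the target on a single random point
with probability at most `1 - ε ≤ exp (-ε)`, hence on an i.i.d. sample of size `m` with
probability at most `exp (-ε m)`. A union bound over the finite class gives
`|C| exp (-ε m)`, which the sample-size condition makes at most `δ`.
-/

open MeasureTheory ENNReal

namespace PAC

variable {X ι : Type*} [MeasurableSpace X] [Fintype ι]

def trueError (D : Measure X) (c h : X → Bool) : ℝ≥0∞ := D {x | h x ≠ c x}

lemma measure_agree_eq_one_sub_trueError (D : Measure X) [IsProbabilityMeasure D]
    {c h : X → Bool} (hc : Measurable c) (hh : Measurable h) :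
    D {x | h x = c x} = 1 - trueError D c h := by
  have hdisagree : {x | h x ≠ c x} = {x | h x = c x}ᶜ := rfl
  rw [trueError, hdisagree, prob_compl_eq_one_sub (measurableSet_eq_fun hh hc),
    ENNReal.sub_sub_cancel one_ne_top prob_le_one]

lemma measure_pi_consistent_le_exp (D : Measure X) [IsProbabilityMeasure D]
    {c h : X → Bool} (hc : Measurable c) (hh : Measurable h)
    {ε : ℝ} (hε : 0 ≤ ε) (herr : ENNReal.ofReal ε ≤ trueError D c h) :
    Measure.pi (fun _ : ι => D) {xs | ∀ i, h (xs i) = c (xs i)}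
      ≤ ENNReal.ofReal (Real.exp (-(ε * Fintype.card ι))) := by
  have hagree : D {x | h x = c x} ≤ ENNReal.ofReal (Real.exp (-ε)) :=
    calc D {x | h x = c x} = 1 - trueError D c h := measure_agree_eq_one_sub_trueError D hc hh
      _ ≤ 1 - ENNReal.ofReal ε := tsub_le_tsub_left herr 1
      _ = ENNReal.ofReal (1 - ε) := by rw [ENNReal.ofReal_sub 1 hε, ENNReal.ofReal_one]
      _ ≤ ENNReal.ofReal (Real.exp (-ε)) := ENNReal.ofReal_le_ofReal (Real.one_sub_le_exp_neg ε)
  have hpi : {xs : ι → X | ∀ i, h (xs i) = c (xs i)} = Set.univ.pi fun _ => {x | h x = c x} := by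
    ext xs
    simp
  calc Measure.pi (fun _ : ι => D) {xs | ∀ i, h (xs i) = c (xs i)}
      = D {x | h x = c x} ^ Fintype.card ι := by
        rw [hpi, Measure.pi_pi, Finset.prod_const, Finset.card_univ]
    _ ≤ ENNReal.ofReal (Real.exp (-ε)) ^ Fintype.card ι := pow_le_pow_left' hagree _
    _ = ENNReal.ofReal (Real.exp (-(ε * Fintype.card ι))) := by
        rw [← ENNReal.ofReal_pow (Real.exp_pos _).le, ← Real.exp_nat_mul]
        ring_nf

lemma measure_pi_exists_consistent_of_error_gt_le (D : Measure X) [IsProbabilityMeasure D]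
    (C : Finset (X → Bool)) (hC : ∀ h ∈ C, Measurable h) {c : X → Bool} (hc : Measurable c)
    {ε : ℝ} (hε : 0 ≤ ε) :
    Measure.pi (fun _ : ι => D)
      {xs | ∃ h ∈ C, (∀ i, h (xs i) = c (xs i)) ∧ ENNReal.ofReal ε < trueError D c h}
      ≤ C.card * ENNReal.ofReal (Real.exp (-(ε * Fintype.card ι))) := by
  classical
  set bad := C.filter fun h => ENNReal.ofReal ε < trueError D c h
  have hsub : {xs : ι → X | ∃ h ∈ C, (∀ i, h (xs i) = c (xs i)) ∧
      ENNReal.ofReal ε < trueError D c h} ⊆ ⋃ h ∈ bad, {xs | ∀ i, h (xs i) = c (xs i)} := by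
    rintro xs ⟨h, hmem, hcons, herr⟩
    exact Set.mem_biUnion (Finset.mem_filter.2 ⟨hmem, herr⟩) hcons
  calc _ ≤ ∑ h ∈ bad, Measure.pi (fun _ : ι => D) {xs | ∀ i, h (xs i) = c (xs i)} :=
        (measure_mono hsub).trans (measure_biUnion_finset_le _ _)
    _ ≤ ∑ _h ∈ bad, ENNReal.ofReal (Real.exp (-(ε * Fintype.card ι))) := by
        refine Finset.sum_le_sum fun h hbad => ?_
        obtain ⟨hmem, herr⟩ := Finset.mem_filter.1 hbad
        exact measure_pi_consistent_le_exp D hc (hC h hmem) hε herr.le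
    _ ≤ C.card * ENNReal.ofReal (Real.exp (-(ε * Fintype.card ι))) := by
        rw [Finset.sum_const, nsmul_eq_mul]
        exact mul_le_mul_left (Nat.cast_le.2 (Finset.card_filter_le _ _)) _

lemma natCast_mul_exp_neg_le {n : ℕ} {ε δ t : ℝ} (hε : 0 < ε) (hδ : 0 < δ)
    (ht : (1 / ε) * Real.log (n / δ) ≤ t) :
    n * Real.exp (-(ε * t)) ≤ δ := by
  rcases n.eq_zero_or_pos with rfl | hn
  · simpa using hδ.le
  have hlog : Real.log (n / δ) ≤ ε * t := by
    rwa [one_div_mul_eq_div, div_le_iff₀' hε] at ht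
  have hexp : n / δ ≤ Real.exp (ε * t) := (Real.log_le_iff_le_exp (by positivity)).1 hlog
  rw [Real.exp_neg, ← div_eq_mul_inv, div_le_iff₀ (Real.exp_pos _)]
  rwa [div_le_iff₀' hδ] at hexp

end PAC

theorem stmt13_general {X : Type*} [MeasurableSpace X] (D : Measure X) [IsProbabilityMeasure D]
    (C : Finset (X → Bool)) (hCmeas : ∀ h ∈ C, Measurable h)
    (c : X → Bool) (hc : Measurable c)
    (ε δ : ℝ) (hε : ε ∈ Set.Ioo (0 : ℝ) 1) (hδ : δ ∈ Set.Ioo (0 : ℝ) 1)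
    (m : ℕ) (hsample : (1 / ε) * Real.log (C.card / δ) ≤ m) :
    Measure.pi (fun _ : Fin m => D)
      {xs : Fin m → X | ∃ h ∈ C, (∀ i, h (xs i) = c (xs i)) ∧
        ENNReal.ofReal ε < D {x | h x ≠ c x}}
    ≤ ENNReal.ofReal δ := by
  have hbound := PAC.natCast_mul_exp_neg_le hε.1 hδ.1 hsample
  calc _ ≤ C.card * ENNReal.ofReal (Real.exp (-(ε * Fintype.card (Fin m)))) :=
        PAC.measure_pi_exists_consistent_of_error_gt_le D C hCmeas hc hε.1.le
    _ = ENNReal.ofReal (C.card * Real.exp (-(ε * m))) := by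
        rw [Fintype.card_fin, ENNReal.ofReal_mul (Nat.cast_nonneg _), ENNReal.ofReal_natCast]
    _ ≤ ENNReal.ofReal δ := ENNReal.ofReal_le_ofReal hbound

/-- Realizable-case PAC learnability of a finite concept class: if
`m ≥ (1/ε) ln(|C|/δ)`, then the probability (under `m` i.i.d. draws from `D`) that some
hypothesis `h ∈ C` is consistent with the target `c` on the sample yet has true error
greater than `ε` is at most `δ`. -/
theorem stmt13 {X : Type*} [MeasurableSpace X] (D : Measure X) [IsProbabilityMeasure D]
    (C : Finset (X → Bool)) (hCne : C.Nonempty) (hCmeas : ∀ h ∈ C, Measurable h)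
    (c : X → Bool) (hc : Measurable c)
    (ε δ : ℝ) (hε : ε ∈ Set.Ioo (0 : ℝ) 1) (hδ : δ ∈ Set.Ioo (0 : ℝ) 1)
    (m : ℕ) (hm : 0 < m) (hsample : (1 / ε) * Real.log (C.card / δ) ≤ m) :
    Measure.pi (fun _ : Fin m => D)
      {xs : Fin m → X | ∃ h ∈ C, (∀ i, h (xs i) = c (xs i)) ∧
        ENNReal.ofReal ε < D {x | h x ≠ c x}}
    ≤ ENNReal.ofReal δ :=
  stmt13_general D C hCmeas c hc ε δ hε hδ m hsample
end
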